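/- arXiv:1112.1999 — 2 statements merged into one kernel-verified Lean document; each statement's English description precedes it below -/
import Mathlib

section
/- Let k be a field of characteristic 2 and let n be an odd positive integer. Then PGL_2(k) contains a subgroup isomorphic to the dihedral group of order 2n if and only if there exists a primitive n-th root of unity ζ in an algebraic closure of k such that ζ + ζ^{-1} lies in the image of k in that algebraic closure. -/
open Matrix

/-- `PGL₂ k`: the projective general linear group, i.e. `GL(2,k)` modulo its center
(the scalar matrices). -/
abbrev PGL2 (k : Type*) [Field k] : Type _ :=
  GL (Fin 2) k ⧸ Subgroup.center (GL (Fin 2) k)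

/-!
An element of odd order `n > 1` in `PGL₂(k)` lifts to `A ∈ GL₂(k)` with distinct eigenvalues
`α, β` in the algebraic closure: in characteristic 2 a repeated eigenvalue forces `tr A = 0`,
and then `A²` is scalar. Reducing `X ^ m` modulo the characteristic polynomial gives
`A ^ m = a A + b`, `α ^ m = a α + b`, `β ^ m = a β + b` with the same `a, b`, so `A ^ m` is scalar
iff `α ^ m = β ^ m`. Hence the class of `A` has the order of `ζ = α / β`, and
`ζ + ζ⁻¹ = (tr² A - 2 det A) / det A` lies in `k`.

Conversely, for `s = ζ + ζ⁻¹` the matrix `!![0, 1; -1, s]` has eigenvalues `ζ, ζ⁻¹`, so its class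
has the order `n` of `ζ ^ 2`, and conjugation by the coordinate swap inverts it; together they
generate a dihedral group of order `2n`.
-/

open Polynomial

section Quadratic

variable {k R : Type*} [Field k] [Ring R] [Algebra k R]

theorem pow_eq_of_aeval_eq_zero {q : k[X]} (hq : q.Monic) (hq2 : q.degree ≤ 2) {y : R}
    (hy : aeval y q = 0) (m : ℕ) :
    y ^ m = algebraMap k R ((X ^ m %ₘ q).coeff 1) * y + algebraMap k R ((X ^ m %ₘ q).coeff 0) := by
  have hdeg : (X ^ m %ₘ q).degree ≤ 1 :=
    Order.le_of_lt_succ ((degree_modByMonic_lt _ hq).trans_le hq2)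
  conv_lhs => rw [← aeval_X_pow (R := k), ← aeval_modByMonic_eq_self_of_root hy,
    eq_X_add_C_of_degree_le_one hdeg]
  simp

theorem mul_add_mem_range_algebraMap_iff {x : R} (hx : x ∉ Set.range (algebraMap k R)) (a b : k) :
    algebraMap k R a * x + algebraMap k R b ∈ Set.range (algebraMap k R) ↔ a = 0 := by
  refine ⟨fun ⟨c, hc⟩ ↦ by_contra fun ha ↦ hx ⟨a⁻¹ * (c - b), ?_⟩, fun ha ↦ ⟨b, by simp [ha]⟩⟩
  rw [map_mul, map_sub, hc, add_sub_cancel_right, ← mul_assoc, ← map_mul, inv_mul_cancel₀ ha,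
    map_one, one_mul]

theorem pow_mem_range_algebraMap_iff {K : Type*} [Field K] [Algebra k K] {q : k[X]}
    (hq : q.Monic) (hq2 : q.degree ≤ 2) {x : R} (hx : aeval x q = 0)
    (hx_notMem : x ∉ Set.range (algebraMap k R)) {a b : K} (ha : aeval a q = 0)
    (hb : aeval b q = 0) (hab : a ≠ b) (m : ℕ) :
    x ^ m ∈ Set.range (algebraMap k R) ↔ a ^ m = b ^ m := by
  rw [pow_eq_of_aeval_eq_zero hq hq2 hx, mul_add_mem_range_algebraMap_iff hx_notMem,
    pow_eq_of_aeval_eq_zero hq hq2 ha, pow_eq_of_aeval_eq_zero hq hq2 hb, add_left_inj,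
    mul_eq_mul_left_iff, or_iff_right hab, map_eq_zero]

end Quadratic

theorem IsAlgClosed.exists_add_eq_and_mul_eq {K : Type*} [Field K] [IsAlgClosed K] (t d : K) :
    ∃ a b : K, a + b = t ∧ a * b = d := by
  have hdeg : (X ^ 2 - C t * X + C d).degree = 2 := by compute_degree!
  obtain ⟨a, ha⟩ := IsAlgClosed.exists_root (X ^ 2 - C t * X + C d) (by rw [hdeg]; decide)
  refine ⟨a, t - a, by ring, ?_⟩
  simp only [IsRoot.def, eval_add, eval_sub, eval_pow, eval_X, eval_mul, eval_C] at ha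
  linear_combination -ha

theorem div_add_inv_div_eq {k K : Type*} [Field k] [Field K] [Algebra k K] {t d : k} {a b : K}
    (hadd : a + b = algebraMap k K t) (hmul : a * b = algebraMap k K d) (hd : d ≠ 0) :
    a / b + (a / b)⁻¹ = algebraMap k K ((t ^ 2 - 2 * d) / d) := by
  have hab : a * b ≠ 0 := hmul ▸ (_root_.map_ne_zero _).2 hd
  rw [map_div₀, map_sub, map_mul, map_pow, ← hadd, ← hmul, map_ofNat, inv_div]
  field_simp
  ring

section Dihedral

variable {G : Type*} [Group G]

theorem exists_subgroup_mulEquiv_dihedralGroup {n : ℕ} [NeZero n] {x y : G}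
    (hx : orderOf x = n) (hy : y * y = 1) (hyx : y * x * y⁻¹ = x⁻¹)
    (hy_notMem : y ∉ Subgroup.zpowers x) :
    ∃ H : Subgroup G, Nonempty (H ≃* DihedralGroup n) := by
  set rot : ZMod n → G := fun i ↦ x ^ i.val
  have rot_add (i j : ZMod n) : rot (i + j) = rot i * rot j := by
    simp only [rot, ZMod.val_add, ← hx, pow_mod_orderOf, pow_add]
  have rot_neg (i : ZMod n) : rot (-i) = (rot i)⁻¹ :=
    eq_inv_of_mul_eq_one_left (by rw [← rot_add, neg_add_cancel]; simp [rot])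
  have rot_mul_y (i : ZMod n) : rot i * y = y * rot (-i) := by
    have hy_inv : y⁻¹ = y := inv_eq_of_mul_eq_one_right hy
    rw [rot_neg, ← inv_pow, ← hyx, conj_pow, hy_inv, ← mul_assoc, ← mul_assoc, hy, one_mul]
  let F : DihedralGroup n →* G :=
    { toFun := fun
        | .r i => rot i
        | .sr i => y * rot i
      map_one' := show rot 0 = 1 by simp [rot]
      map_mul' := by
        rintro (i | i) (j | j)
        · exact rot_add i j
        · show y * rot (j - i) = rot i * (y * rot j)
          rw [← mul_assoc, rot_mul_y, mul_assoc, ← rot_add, neg_add_eq_sub]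
        · show y * rot (i + j) = y * rot i * rot j
          rw [mul_assoc, rot_add]
        · show rot (j - i) = y * rot i * (y * rot j)
          rw [mul_assoc, ← mul_assoc (rot i), rot_mul_y, ← mul_assoc, ← mul_assoc, hy, one_mul,
            ← rot_add, neg_add_eq_sub] }
  have hF : Function.Injective F := by
    refine (injective_iff_map_eq_one F).2 ?_
    rintro (i | i) h
    · change x ^ i.val = 1 at h
      have hi : i.val = 0 :=
        Nat.eq_zero_of_dvd_of_lt (hx ▸ orderOf_dvd_of_pow_eq_one h) (hx ▸ i.val_lt)
      rw [(ZMod.val_eq_zero i).1 hi, DihedralGroup.r_zero]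
    · have hy_eq : y = (rot i)⁻¹ := eq_inv_of_mul_eq_one_left h
      exact (hy_notMem (hy_eq ▸ inv_mem (pow_mem (Subgroup.mem_zpowers x) i.val))).elim
  exact ⟨F.range, ⟨(MonoidHom.ofInjective hF).symm⟩⟩

theorem notMem_zpowers_of_mul_mul_inv_eq_inv {x y : G} (hyx : y * x * y⁻¹ = x⁻¹)
    (hx : ¬ orderOf x ∣ 2) : y ∉ Subgroup.zpowers x := by
  rintro ⟨j, rfl⟩
  refine hx (orderOf_dvd_of_pow_eq_one ?_)
  rw [((Commute.refl x).zpow_left j).eq, mul_inv_cancel_right] at hyx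
  rw [sq]
  nth_rw 1 [hyx]
  exact inv_mul_cancel x

end Dihedral

theorem Matrix.GeneralLinearGroup.mk_pow_eq_one_iff {n R : Type*} [Fintype n] [DecidableEq n]
    [CommRing R] (A : GL n R) (m : ℕ) :
    (QuotientGroup.mk A : GL n R ⧸ Subgroup.center (GL n R)) ^ m = 1 ↔
      (A : Matrix n n R) ^ m ∈ Set.range (algebraMap R (Matrix n n R)) := by
  rw [← QuotientGroup.mk_pow, QuotientGroup.eq_one_iff,
    GeneralLinearGroup.mem_center_iff_val_mem_range_scalar, Units.val_pow_eq_pow_val]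
  rfl

theorem Matrix.aeval_charpoly_fin_two_eq_zero {k K : Type*} [Field k] [Field K] [Algebra k K]
    (M : Matrix (Fin 2) (Fin 2) k) {a b : K} (hadd : a + b = algebraMap k K M.trace)
    (hmul : a * b = algebraMap k K M.det) : aeval a M.charpoly = 0 := by
  rw [charpoly_fin_two]
  simp only [map_add, map_sub, map_mul, map_pow, aeval_X, aeval_C]
  linear_combination a * hadd - hmul

namespace PGL2

variable {k : Type*} [Field k]

theorem orderOf_mk_eq_orderOf_div {K : Type*} [Field K] [Algebra k K] (A : GL (Fin 2) k)
    {a b : K} (hadd : a + b = algebraMap k K (A : Matrix (Fin 2) (Fin 2) k).trace)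
    (hmul : a * b = algebraMap k K (A : Matrix (Fin 2) (Fin 2) k).det) (hab : a ≠ b) :
    orderOf (QuotientGroup.mk A : PGL2 k) = orderOf (a / b) := by
  set M : Matrix (Fin 2) (Fin 2) k := A.val
  have hM : M ∉ Set.range (algebraMap k (Matrix (Fin 2) (Fin 2) k)) := by
    rintro ⟨c, hc⟩
    simp only [← hc, trace_fin_two, det_fin_two, algebraMap_matrix_apply, ↓reduceIte,
      Algebra.algebraMap_self, RingHom.id_apply, map_add, Fin.isValue, zero_ne_one, one_ne_zero,
      mul_zero, sub_zero, map_mul] at hadd hmul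
    have hsq : (a - b) ^ 2 = 0 := by
      linear_combination (a + b + 2 * algebraMap k K c) * hadd - 4 * hmul
    exact hab (sub_eq_zero.1 (pow_eq_zero_iff two_ne_zero |>.1 hsq))
  have hb : b ≠ 0 := by
    rintro rfl
    exact A.det_ne_zero (by simpa using hmul.symm)
  rw [orderOf_eq_orderOf_iff]
  intro m
  rw [GeneralLinearGroup.mk_pow_eq_one_iff,
    pow_mem_range_algebraMap_iff (charpoly_monic M) (by simp [charpoly_degree_eq_dim])
      (aeval_self_charpoly M) hM (aeval_charpoly_fin_two_eq_zero M hadd hmul)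
      (aeval_charpoly_fin_two_eq_zero M ((add_comm b a).trans hadd) ((mul_comm b a).trans hmul))
      hab,
    div_pow, div_eq_one_iff_eq (pow_ne_zero m hb)]

theorem orderOf_mk_dvd_two_of_trace_eq_zero (A : GL (Fin 2) k)
    (hA : (A : Matrix (Fin 2) (Fin 2) k).trace = 0) :
    orderOf (QuotientGroup.mk A : PGL2 k) ∣ 2 := by
  refine orderOf_dvd_of_pow_eq_one
    ((GeneralLinearGroup.mk_pow_eq_one_iff A 2).2 ⟨-(A : Matrix (Fin 2) (Fin 2) k).det, ?_⟩)
  have hCH := aeval_self_charpoly (A : Matrix (Fin 2) (Fin 2) k)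
  rw [charpoly_fin_two, hA] at hCH
  simp only [map_zero, zero_mul, sub_zero, map_add, map_pow, aeval_X, aeval_C] at hCH
  rw [map_neg, neg_eq_iff_add_eq_zero, add_comm, hCH]

variable (k) in
def swapGL : GL (Fin 2) k :=
  GeneralLinearGroup.mkOfDetNeZero !![0, 1; 1, 0] (by simp)

def companionGL (s : k) : GL (Fin 2) k :=
  GeneralLinearGroup.mkOfDetNeZero !![0, 1; -1, s] (by simp)

theorem swapGL_mul_self : swapGL k * swapGL k = 1 := by
  ext i j
  fin_cases i <;> fin_cases j <;> simp [swapGL]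

theorem swapGL_mul_companionGL_mul_swapGL_inv (s : k) :
    swapGL k * companionGL s * (swapGL k)⁻¹ = (companionGL s)⁻¹ := by
  rw [inv_eq_of_mul_eq_one_right swapGL_mul_self, eq_inv_iff_mul_eq_one]
  ext i j
  fin_cases i <;> fin_cases j <;> simp [swapGL, companionGL]

theorem mk_swapGL_ne_one : (QuotientGroup.mk (swapGL k) : PGL2 k) ≠ 1 := by
  rw [← pow_one (QuotientGroup.mk _), Ne, GeneralLinearGroup.mk_pow_eq_one_iff]
  rintro ⟨c, hc⟩
  simpa [swapGL, algebraMap_matrix_apply] using congrFun (congrFun hc 0) 1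

theorem exists_subgroup_mulEquiv_dihedralGroup_one :
    ∃ H : Subgroup (PGL2 k), Nonempty (H ≃* DihedralGroup 1) :=
  exists_subgroup_mulEquiv_dihedralGroup orderOf_one
    (by rw [← QuotientGroup.mk_mul, swapGL_mul_self]; rfl) (by simp)
    (by simpa using mk_swapGL_ne_one)

theorem exists_subgroup_mulEquiv_dihedralGroup_of_isPrimitiveRoot {K : Type*} [Field K]
    [Algebra k K] {n : ℕ} (hodd : Odd n) {ζ : K} (hζ : IsPrimitiveRoot ζ n) {s : k}
    (hs : algebraMap k K s = ζ + ζ⁻¹) :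
    ∃ H : Subgroup (PGL2 k), Nonempty (H ≃* DihedralGroup n) := by
  obtain rfl | hn1 := eq_or_ne n 1
  · exact exists_subgroup_mulEquiv_dihedralGroup_one
  have : NeZero n := ⟨hodd.pos.ne'⟩
  have hn2 : ¬ n ∣ 2 := fun h ↦ hn1 (hodd.coprime_two_right.eq_one_of_dvd h)
  have hζ0 : ζ ≠ 0 := hζ.ne_zero hodd.pos.ne'
  have hζζ : ζ ≠ ζ⁻¹ := fun h ↦ hn2 <| hζ.dvd_of_pow_eq_one 2 <| by
    rw [sq]; nth_rw 2 [h]; exact mul_inv_cancel₀ hζ0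
  set x : PGL2 k := QuotientGroup.mk (companionGL s)
  set y : PGL2 k := QuotientGroup.mk (swapGL k)
  have hx : orderOf x = n := by
    rw [orderOf_mk_eq_orderOf_div (companionGL s) (a := ζ) (b := ζ⁻¹) ?_ ?_ hζζ, div_inv_eq_mul,
      ← sq]
    · exact ((hζ.pow_of_coprime 2 hodd.coprime_two_right.symm).eq_orderOf).symm
    · simp [companionGL, hs]
    · simp [companionGL, mul_inv_cancel₀ hζ0]
  have hyx : y * x * y⁻¹ = x⁻¹ := by
    simp only [y, x, ← QuotientGroup.mk_mul, ← QuotientGroup.mk_inv,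
      swapGL_mul_companionGL_mul_swapGL_inv]
  exact exists_subgroup_mulEquiv_dihedralGroup hx
    (by rw [← QuotientGroup.mk_mul, swapGL_mul_self]; rfl) hyx
    (notMem_zpowers_of_mul_mul_inv_eq_inv hyx (hx ▸ hn2))

theorem exists_isPrimitiveRoot_of_orderOf_eq [CharP k 2] {n : ℕ} (hodd : Odd n) {x : PGL2 k}
    (hx : orderOf x = n) :
    ∃ ζ : AlgebraicClosure k, IsPrimitiveRoot ζ n ∧
      ζ + ζ⁻¹ ∈ (algebraMap k (AlgebraicClosure k)).range := by
  obtain rfl | hn1 := eq_or_ne n 1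
  · exact ⟨1, IsPrimitiveRoot.one, 2, by rw [map_ofNat, inv_one, one_add_one_eq_two]⟩
  obtain ⟨A, rfl⟩ := QuotientGroup.mk_surjective x
  set M := (A : Matrix (Fin 2) (Fin 2) k)
  have ht : M.trace ≠ 0 := fun ht ↦ hn1 <|
    hodd.coprime_two_right.eq_one_of_dvd (hx ▸ orderOf_mk_dvd_two_of_trace_eq_zero A ht)
  obtain ⟨a, b, hadd, hmul⟩ := IsAlgClosed.exists_add_eq_and_mul_eq
    (algebraMap k (AlgebraicClosure k) M.trace) (algebraMap k (AlgebraicClosure k) M.det)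
  have hab : a ≠ b := by
    rintro rfl
    exact ht ((map_eq_zero _).1 (by rw [← hadd, CharTwo.add_self_eq_zero]))
  refine ⟨a / b, ?_, _, (div_add_inv_div_eq hadd hmul A.det_ne_zero).symm⟩
  rw [← hx, orderOf_mk_eq_orderOf_div A hadd hmul hab]
  exact IsPrimitiveRoot.orderOf _

end PGL2

theorem dihedral_subgroup_exists_iff_char_two_general
    (k : Type) [Field k] [CharP k 2] (n : ℕ) (hodd : Odd n) :
    (∃ H : Subgroup (PGL2 k), Nonempty (H ≃* DihedralGroup n)) ↔
      (∃ ζ : AlgebraicClosure k, IsPrimitiveRoot ζ n ∧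
        ζ + ζ⁻¹ ∈ (algebraMap k (AlgebraicClosure k)).range) := by
  constructor
  · rintro ⟨H, ⟨e⟩⟩
    refine PGL2.exists_isPrimitiveRoot_of_orderOf_eq hodd (x := e.symm (DihedralGroup.r 1)) ?_
    rw [Subgroup.orderOf_coe, MulEquiv.orderOf_eq, DihedralGroup.orderOf_r_one]
  · rintro ⟨ζ, hζ, s, hs⟩
    exact PGL2.exists_subgroup_mulEquiv_dihedralGroup_of_isPrimitiveRoot hodd hζ hs

/-- **Existence of dihedral subgroups in characteristic 2.**
Let `k` be a field of characteristic `2` and `n` an odd positive integer.  Then `PGL₂(k)`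
contains a subgroup isomorphic to the dihedral group of order `2n` if and only if there is a
primitive `n`-th root of unity `ζ` in an algebraic closure of `k` with `ζ + ζ⁻¹` lying in
the image of `k`. -/
theorem dihedral_subgroup_exists_iff_char_two
    (k : Type) [Field k] [CharP k 2] (n : ℕ) (hn : 0 < n) (hodd : Odd n) :
    (∃ H : Subgroup (PGL2 k), Nonempty (H ≃* DihedralGroup n)) ↔
      (∃ ζ : AlgebraicClosure k, IsPrimitiveRoot ζ n ∧
        ζ + ζ⁻¹ ∈ (algebraMap k (AlgebraicClosure k)).range) :=
  dihedral_subgroup_exists_iff_char_two_general k n hodd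
end

section
/- Let k be an algebraically closed field, let s be a nontrivial element of PGL_2(k), and let A ∈ GL(2,k) be any matrix representing s. Then: s has order 2 if and only if trace(A) = 0; s has order 3 if and only if (trace A)^2 = det(A); and s has order 5 if and only if (trace A)^4 − 3·(trace A)^2·det(A) + (det A)^2 = 0. -/
/-!
With `t = tr A` and `d = det A`, Cayley–Hamilton gives `A² = t A - d`, hence
`Aⁿ⁺¹ = Uₙ₊₁ A - d Uₙ` for the Lucas sequence `U = U(t, d)`. As `s ≠ 1`, `A` is not scalar, so
`c A + e` is scalar only when `c = 0`; for a prime `p` this makes `s` of order `p` exactly when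
`Aᵖ` is scalar, i.e. when `Uₚ = 0`. Finally `U₂ = t`, `U₃ = t² - d` and
`U₅ = t⁴ - 3 t² d + d²`.
-/

open Matrix

def lucasU {R : Type*} [CommRing R] (t d : R) : ℕ → R
  | 0 => 0
  | 1 => 1
  | n + 2 => t * lucasU t d (n + 1) - d * lucasU t d n

theorem pow_succ_eq_lucasU_smul_sub {R A : Type*} [CommRing R] [Ring A] [Algebra R A] {x : A}
    {t d : R} (hx : x ^ 2 = t • x - algebraMap R A d) (n : ℕ) :
    x ^ (n + 1) = lucasU t d (n + 1) • x - algebraMap R A (d * lucasU t d n) := by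
  induction n with
  | zero => simp [lucasU]
  | succ n ih =>
    simp only [Algebra.algebraMap_eq_smul_one] at hx ih ⊢
    rw [pow_succ, ih, sub_mul, smul_mul_assoc, smul_mul_assoc, one_mul, ← sq, hx, lucasU]
    module

theorem smul_add_algebraMap_mem_range_algebraMap_iff {K A : Type*} [Field K] [Ring A]
    [Algebra K A] {x : A} (hx : x ∉ Set.range (algebraMap K A)) (c e : K) :
    c • x + algebraMap K A e ∈ Set.range (algebraMap K A) ↔ c = 0 := by
  refine ⟨fun ⟨r, hr⟩ ↦ by_contra fun hc ↦ hx ⟨c⁻¹ * (r - e), ?_⟩, fun hc ↦ ⟨e, by simp [hc]⟩⟩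
  rw [map_mul, ← Algebra.smul_def, map_sub, hr, add_sub_cancel_right, inv_smul_smul₀ hc]

theorem Matrix.sq_eq_trace_smul_sub_algebraMap_det {R : Type*} [CommRing R]
    (M : Matrix (Fin 2) (Fin 2) R) : M ^ 2 = M.trace • M - algebraMap R _ M.det := by
  nontriviality R
  have hCH := M.aeval_self_charpoly
  simp only [charpoly_fin_two, map_add, map_sub, map_pow, map_mul, Polynomial.aeval_X,
    Polynomial.aeval_C, ← Algebra.smul_def] at hCH
  exact eq_of_sub_eq_zero (by rw [← hCH]; abel)

theorem orderOf_mk_eq_prime_iff_lucasU {k : Type*} [Field k] {A : GL (Fin 2) k}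
    (hA : (A : PGL2 k) ≠ 1) (p : ℕ) [Fact p.Prime] :
    orderOf (A : PGL2 k) = p ↔
      lucasU (A : Matrix (Fin 2) (Fin 2) k).trace (A : Matrix (Fin 2) (Fin 2) k).det p = 0 := by
  set M := (A : Matrix (Fin 2) (Fin 2) k)
  have hM : M ∉ Set.range (algebraMap k _) := by
    rwa [Ne, QuotientGroup.eq_one_iff, GeneralLinearGroup.mem_center_iff_val_mem_range_scalar]
      at hA
  obtain ⟨n, rfl⟩ : ∃ n, p = n + 1 := Nat.exists_eq_add_one.mpr (Nat.Prime.pos Fact.out)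
  rw [orderOf_eq_prime_iff, and_iff_left hA, ← QuotientGroup.mk_pow, QuotientGroup.eq_one_iff,
    GeneralLinearGroup.mem_center_iff_val_mem_range_scalar, Units.val_pow_eq_pow_val,
    pow_succ_eq_lucasU_smul_sub M.sq_eq_trace_smul_sub_algebraMap_det, sub_eq_add_neg, ← map_neg]
  exact smul_add_algebraMap_mem_range_algebraMap_iff hM _ _

theorem orderOf_eq_two_three_five_iff_trace_det_general
    (k : Type) [Field k]
    (s : PGL2 k) (hs : s ≠ 1)
    (A : GL (Fin 2) k) (hA : (QuotientGroup.mk A : PGL2 k) = s) :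
    (orderOf s = 2 ↔ (A : Matrix (Fin 2) (Fin 2) k).trace = 0) ∧
    (orderOf s = 3 ↔
      (A : Matrix (Fin 2) (Fin 2) k).trace ^ 2 = (A : Matrix (Fin 2) (Fin 2) k).det) ∧
    (orderOf s = 5 ↔
      (A : Matrix (Fin 2) (Fin 2) k).trace ^ 4
          - 3 * (A : Matrix (Fin 2) (Fin 2) k).trace ^ 2 * (A : Matrix (Fin 2) (Fin 2) k).det
          + (A : Matrix (Fin 2) (Fin 2) k).det ^ 2 = 0) := by
  subst hA
  have : Fact (Nat.Prime 5) := ⟨by norm_num⟩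
  simp only [orderOf_mk_eq_prime_iff_lucasU hs, lucasU]
  exact ⟨by ring_nf, by ring_nf; exact sub_eq_zero, by ring_nf⟩

/-- **Trace/determinant criteria for elements of order 2, 3 and 5.**
Let `k` be an algebraically closed field, let `s ∈ PGL₂(k)` be nontrivial and let
`A ∈ GL(2,k)` represent `s`.  Then `s` has order 2 iff `tr A = 0`; order 3 iff
`(tr A)² = det A`; and order 5 iff `(tr A)⁴ − 3 (tr A)² det A + (det A)² = 0`. -/
theorem orderOf_eq_two_three_five_iff_trace_det
    (k : Type) [Field k] [IsAlgClosed k]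
    (s : PGL2 k) (hs : s ≠ 1)
    (A : GL (Fin 2) k) (hA : (QuotientGroup.mk A : PGL2 k) = s) :
    (orderOf s = 2 ↔ (A : Matrix (Fin 2) (Fin 2) k).trace = 0) ∧
    (orderOf s = 3 ↔
      (A : Matrix (Fin 2) (Fin 2) k).trace ^ 2 = (A : Matrix (Fin 2) (Fin 2) k).det) ∧
    (orderOf s = 5 ↔
      (A : Matrix (Fin 2) (Fin 2) k).trace ^ 4
          - 3 * (A : Matrix (Fin 2) (Fin 2) k).trace ^ 2 * (A : Matrix (Fin 2) (Fin 2) k).det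
          + (A : Matrix (Fin 2) (Fin 2) k).det ^ 2 = 0) :=
  orderOf_eq_two_three_five_iff_trace_det_general k s hs A hA
end
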